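/- Let A_{I_m} and A_{I_n} be dihedral Artin groups with even labels m and n, let w be a common vertex generator, and form the Artin group A_Γ of the tree Γ consisting of two edges sharing the vertex w, so A_Γ = A_{I_m} ∗_{⟨w⟩} A_{I_n}. Then A_Γ is normally poly-free. -/

import Mathlib

universe u v

/-- Poly-free with a subnormal chain of length `n` (length at most `n`,
since successive subgroups may coincide): there is a chain
`1 = G₀ ⊴ G₁ ⊴ ⋯ ⊴ Gₙ = G` with each quotient `Gᵢ₊₁/Gᵢ` a free group. -/
def IsPolyFreeOfLen : ℕ → (G : Type u) → [Group G] → Prop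
  | 0, G, _ => Subsingleton G
  | n + 1, G, _ => ∃ (N : Subgroup G) (_ : N.Normal),
      IsPolyFreeOfLen n N ∧ IsFreeGroup (G ⧸ N)

/-- A group is poly-free if it admits a subnormal chain with free quotients. -/
def IsPolyFree (G : Type u) [Group G] : Prop := ∃ n, IsPolyFreeOfLen n G

/-- Normally poly-free with a chain of length `n`: a chain
`1 = G₀ ≤ G₁ ≤ ⋯ ≤ Gₙ = G` with every `Gᵢ` normal in `G` and every quotient
`Gᵢ₊₁/Gᵢ` a free group (expressed via a surjection onto a free group whose
kernel is the previous term). -/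
def IsNormallyPolyFreeOfLen (n : ℕ) (G : Type u) [Group G] : Prop :=
  ∃ c : Fin (n + 1) → Subgroup G,
    c 0 = ⊥ ∧ c (Fin.last n) = ⊤ ∧ (∀ i : Fin n, c i.castSucc ≤ c i.succ) ∧
    (∀ i, (c i).Normal) ∧
    ∀ i : Fin n, ∃ (F : Type u) (_ : Group F) (f : ↥(c i.succ) →* F),
      IsFreeGroup F ∧ Function.Surjective f ∧
      f.ker = (c i.castSucc).subgroupOf (c i.succ)

/-- A group is normally poly-free if it admits such a chain of some length. -/
def IsNormallyPolyFree (G : Type u) [Group G] : Prop :=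
  ∃ n, IsNormallyPolyFreeOfLen n G

/-- The alternating product `x * y * x * ⋯` of length `n`. -/
def altProd {M : Type*} [Monoid M] (x y : M) : ℕ → M
  | 0 => 1
  | n + 1 => x * altProd y x n

/-- The dihedral Artin group with label `n`:
`⟨x, y ∣ ⟨x,y⟩ⁿ = ⟨y,x⟩ⁿ⟩` where `⟨x,y⟩ⁿ` is the alternating product of length `n`,
with `x = FreeGroup.of true`, `y = FreeGroup.of false`. -/
abbrev DihedralArtin (n : ℕ) : Type :=
  PresentedGroup
    ({altProd (FreeGroup.of true) (FreeGroup.of false) n *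
        (altProd (FreeGroup.of false) (FreeGroup.of true) n)⁻¹} : Set (FreeGroup Bool))

/-- The Artin group of the tree with two edges sharing a vertex `w` (vertex `1`),
with even labels `m` on the edge `(0,1)` and `n` on the edge `(1,2)`, i.e. the
amalgamated product `A_(I_m) ∗_⟨w⟩ A_(I_n)` of the two dihedral Artin groups over
the cyclic subgroup generated by the common vertex. -/
abbrev TwoEdgeTreeArtin (m n : ℕ) : Type :=
  PresentedGroup
    ({altProd (FreeGroup.of (0 : Fin 3)) (FreeGroup.of 1) m *
        (altProd (FreeGroup.of (1 : Fin 3)) (FreeGroup.of 0) m)⁻¹,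
      altProd (FreeGroup.of (1 : Fin 3)) (FreeGroup.of 2) n *
        (altProd (FreeGroup.of (2 : Fin 3)) (FreeGroup.of 1) n)⁻¹} :
      Set (FreeGroup (Fin 3)))

/-!
Send the shared vertex `w` to `1 ∈ ℤ` and the other two generators `x`, `y` to `0`. For
`m = 2p` the conjugates `a j = wʲ x w⁻ʲ` (`j < p`) satisfy `a 0 ⋯ a (p-1) = (x w)ᵖ w⁻ᵖ`,
and the Artin relation `(x w)ᵖ = (w x)ᵖ` says exactly that this cycle product `c` commutes
with `w`; hence conjugation by `w` acts as `a j ↦ a (j+1)` and `a (p-1) ↦ c⁻¹ a 0 c`, and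
the same holds for `y` and `n = 2q`. On the free group `F` on these `p + q` letters the
formulas define an automorphism `σ` (whose inverse is the backward shift), and
`A_Γ ≅ F ⋊_σ ℤ`. So `1 ≤ F ≤ A_Γ` is a chain of normal subgroups with free quotients `F`
and `ℤ`.
-/

section NormallyPolyFree

variable {N : Type*} {G H : Type u} [Group N] [Group G] [Group H]

theorem isNormallyPolyFreeOfLen_two_of_range_eq_ker [IsFreeGroup N] [IsFreeGroup H]
    {i : N →* G} {f : G →* H} (hi : Function.Injective i) (hf : Function.Surjective f)
    (hif : i.range = f.ker) : IsNormallyPolyFreeOfLen 2 G := by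
  have : IsFreeGroup f.ker := hif ▸ IsFreeGroup.ofMulEquiv (MonoidHom.ofInjective hi)
  refine ⟨![⊥, f.ker, ⊤], rfl, rfl, ?_, ?_, ?_⟩
  · intro j
    fin_cases j
    exacts [bot_le, le_top]
  · intro j
    fin_cases j
    exacts [Subgroup.normal_bot, f.normal_ker, Subgroup.normal_top]
  · intro j
    fin_cases j
    · exact ⟨f.ker, inferInstance, MonoidHom.id _, this, Function.surjective_id,
        MonoidHom.ker_id.trans (Subgroup.bot_subgroupOf _).symm⟩
    · refine ⟨H, inferInstance, f.comp (⊤ : Subgroup G).subtype, inferInstance,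
        fun h => ?_, rfl⟩
      obtain ⟨g, rfl⟩ := hf h
      exact ⟨⟨g, trivial⟩, rfl⟩

theorem isNormallyPolyFree_of_mulEquiv_semidirectProduct [IsFreeGroup N] [IsFreeGroup H]
    {φ : H →* MulAut N} (e : G ≃* N ⋊[φ] H) : IsNormallyPolyFree G := by
  refine ⟨2, isNormallyPolyFreeOfLen_two_of_range_eq_ker (i := e.symm.toMonoidHom.comp
    SemidirectProduct.inl) (f := SemidirectProduct.rightHom.comp e.toMonoidHom)
    (e.symm.injective.comp SemidirectProduct.inl_injective)
    (SemidirectProduct.rightHom_surjective.comp e.surjective) ?_⟩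
  rw [MonoidHom.range_comp, SemidirectProduct.range_inl_eq_ker_rightHom, ← MonoidHom.comap_ker,
    Subgroup.map_equiv_eq_comap_symm', MulEquiv.symm_symm]

end NormallyPolyFree

instance : IsFreeGroup (Multiplicative ℤ) :=
  IsFreeGroup.ofMulEquiv (FreeGroup.mulEquivIntOfUnique (α := Unit))

theorem prod_range_map_conj_pow {G : Type*} [Group G] (x t : G) (n : ℕ) :
    ((List.range n).map fun j => t ^ j * x * (t ^ j)⁻¹).prod = (x * t) ^ n * (t ^ n)⁻¹ := by
  induction n with
  | zero => simp
  | succ n ih =>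
    rw [List.prod_range_succ, ih, pow_succ, pow_succ]
    group

theorem map_zpow_apply_of_map_apply_eq_conj {N G : Type*} [Group N] [Group G] (f : N →* G)
    (σ : MulAut N) (t : G) (h : ∀ y, f (σ y) = t * f y * t⁻¹) (n : ℤ) (y : N) :
    f ((σ ^ n) y) = t ^ n * f y * (t ^ n)⁻¹ := by
  induction n using Int.induction_on generalizing y with
  | zero => simp
  | succ n ih =>
    rw [zpow_add_one, MulAut.mul_apply, ih, h, zpow_add_one]
    group
  | pred n ih =>
    have h_inv : f (σ⁻¹ y) = t⁻¹ * f y * t := by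
      have := h (σ⁻¹ y)
      rw [MulAut.apply_inv_self] at this
      rw [this]
      group
    rw [zpow_sub_one, MulAut.mul_apply, ih, h_inv, zpow_sub_one]
    group

abbrev MappingTorus {N : Type*} [Group N] (σ : MulAut N) : Type _ :=
  N ⋊[zpowersHom (MulAut N) σ] Multiplicative ℤ

namespace MappingTorus

open SemidirectProduct

variable {N : Type*} [Group N] (σ : MulAut N)

def stableLetter : MappingTorus σ := inr (Multiplicative.ofAdd 1)

theorem inl_pow_apply (j : ℕ) (y : N) :
    (inl ((σ ^ j) y) : MappingTorus σ) =
      stableLetter σ ^ j * inl y * (stableLetter σ ^ j)⁻¹ := by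
  rw [stableLetter, ← map_pow, ← map_inv, ← inl_aut, map_pow, zpowersHom_apply, toAdd_ofAdd,
    zpow_one]

end MappingTorus

namespace CycleShift

open SemidirectProduct MappingTorus

variable {ι : Type*} (k : ι → ℕ)

/-- The basis element `a i j`, with the junk value `1` when `k i ≤ j`. -/
def letter (i : ι) (j : ℕ) : FreeGroup (Σ i, Fin (k i)) :=
  if h : j < k i then .of ⟨i, j, h⟩ else 1

def cycleProd (i : ι) : FreeGroup (Σ i, Fin (k i)) :=
  ((List.range (k i)).map (letter k i)).prod

/-- Models conjugation by the shared vertex `t` on the letters `a i j = t ^ j * x i * (t ^ j)⁻¹`,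
where `cycleProd k i` commutes with `t`. -/
def shift : FreeGroup (Σ i, Fin (k i)) →* FreeGroup (Σ i, Fin (k i)) :=
  FreeGroup.lift fun a =>
    if (a.2 : ℕ) + 1 < k a.1 then letter k a.1 (a.2 + 1)
    else (cycleProd k a.1)⁻¹ * letter k a.1 0 * cycleProd k a.1

def unshift : FreeGroup (Σ i, Fin (k i)) →* FreeGroup (Σ i, Fin (k i)) :=
  FreeGroup.lift fun a =>
    if 0 < (a.2 : ℕ) then letter k a.1 (a.2 - 1)
    else cycleProd k a.1 * letter k a.1 (k a.1 - 1) * (cycleProd k a.1)⁻¹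

variable {k}

theorem letter_of_lt {i : ι} {j : ℕ} (h : j < k i) : letter k i j = .of ⟨i, j, h⟩ :=
  dif_pos h

theorem cycleProd_eq_mul_letter {i : ι} {p : ℕ} (h : k i = p + 1) :
    cycleProd k i = ((List.range p).map (letter k i)).prod * letter k i p := by
  rw [cycleProd, h, List.prod_range_succ]

theorem cycleProd_eq_letter_mul {i : ι} {p : ℕ} (h : k i = p + 1) :
    cycleProd k i = letter k i 0 * ((List.range p).map fun j => letter k i (j + 1)).prod := by
  rw [cycleProd, h, List.prod_range_succ']

theorem shift_letter {i : ι} {j : ℕ} (h : j + 1 < k i) :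
    shift k (letter k i j) = letter k i (j + 1) := by
  rw [letter_of_lt (by omega), shift, FreeGroup.lift_apply_of, if_pos h]

theorem shift_letter_last {i : ι} {p : ℕ} (h : k i = p + 1) :
    shift k (letter k i p) = (cycleProd k i)⁻¹ * letter k i 0 * cycleProd k i := by
  rw [letter_of_lt (by omega), shift, FreeGroup.lift_apply_of, if_neg (by simp [h])]

theorem unshift_letter {i : ι} {j : ℕ} (h₀ : 0 < j) (h : j < k i) :
    unshift k (letter k i j) = letter k i (j - 1) := by
  rw [letter_of_lt h, unshift, FreeGroup.lift_apply_of, if_pos h₀]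

theorem unshift_letter_zero {i : ι} {p : ℕ} (h : k i = p + 1) :
    unshift k (letter k i 0) = cycleProd k i * letter k i p * (cycleProd k i)⁻¹ := by
  rw [letter_of_lt (by omega), unshift, FreeGroup.lift_apply_of, if_neg (lt_irrefl 0)]
  dsimp only
  rw [h, Nat.add_sub_cancel]

theorem shift_cycleProd (i : ι) : shift k (cycleProd k i) = cycleProd k i := by
  cases h : k i with
  | zero => simp [cycleProd, h]
  | succ p =>
    have h_init : shift k ((List.range p).map (letter k i)).prod =
        ((List.range p).map fun j => letter k i (j + 1)).prod := by
      rw [map_list_prod, List.map_map]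
      exact congrArg List.prod <| List.map_congr_left fun j hj =>
        shift_letter (by rw [List.mem_range] at hj; omega)
    conv_lhs => rw [cycleProd_eq_mul_letter h, map_mul, h_init, shift_letter_last h]
    rw [cycleProd_eq_letter_mul h]
    group

theorem unshift_cycleProd (i : ι) : unshift k (cycleProd k i) = cycleProd k i := by
  cases h : k i with
  | zero => simp [cycleProd, h]
  | succ p =>
    have h_tail : unshift k ((List.range p).map fun j => letter k i (j + 1)).prod =
        ((List.range p).map (letter k i)).prod := by
      rw [map_list_prod, List.map_map]
      exact congrArg List.prod <| List.map_congr_left fun j hj =>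
        unshift_letter (Nat.succ_pos j) (by rw [List.mem_range] at hj; omega)
    conv_lhs => rw [cycleProd_eq_letter_mul h, map_mul, h_tail, unshift_letter_zero h]
    rw [cycleProd_eq_mul_letter h]
    group

theorem unshift_comp_shift : (unshift k).comp (shift k) = MonoidHom.id _ := by
  ext ⟨i, j, hj⟩
  rw [MonoidHom.comp_apply, MonoidHom.id_apply, ← letter_of_lt hj]
  by_cases h : j + 1 < k i
  · rw [shift_letter h]; exact unshift_letter j.succ_pos h
  · have hk : k i = j + 1 := by omega
    rw [shift_letter_last hk, map_mul, map_mul, map_inv, unshift_cycleProd,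
      unshift_letter_zero hk]
    group

theorem shift_comp_unshift : (shift k).comp (unshift k) = MonoidHom.id _ := by
  ext ⟨i, j, hj⟩
  rw [MonoidHom.comp_apply, MonoidHom.id_apply, ← letter_of_lt hj]
  rcases Nat.eq_zero_or_pos j with rfl | h
  · obtain ⟨p, hp⟩ := Nat.exists_eq_add_one_of_ne_zero hj.ne_bot
    rw [unshift_letter_zero hp, map_mul, map_mul, map_inv, shift_cycleProd,
      shift_letter_last hp]
    group
  · rw [unshift_letter h hj, shift_letter (by omega), Nat.sub_add_cancel h]

variable (k) in
def shiftAut : MulAut (FreeGroup (Σ i, Fin (k i))) :=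
  MonoidHom.toMulEquiv (shift k) (unshift k) unshift_comp_shift shift_comp_unshift

theorem shiftAut_apply (y : FreeGroup (Σ i, Fin (k i))) : shiftAut k y = shift k y := rfl

theorem shiftAut_pow_letter_zero {i : ι} {j : ℕ} (h : j < k i) :
    (shiftAut k ^ j) (letter k i 0) = letter k i j := by
  induction j with
  | zero => rfl
  | succ j ih => rw [pow_succ', MulAut.mul_apply, ih (by omega)]; exact shift_letter h

theorem inl_cycleProd (i : ι) :
    (inl (cycleProd k i) : MappingTorus (shiftAut k)) =
      (inl (letter k i 0) * stableLetter _) ^ k i * (stableLetter _ ^ k i)⁻¹ := by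
  rw [← prod_range_map_conj_pow, cycleProd, map_list_prod, List.map_map]
  exact congrArg List.prod <| List.map_congr_left fun j hj => by
    rw [Function.comp_apply, ← inl_pow_apply, shiftAut_pow_letter_zero (List.mem_range.mp hj)]

/-- The dihedral Artin relation of label `2 * k i`; it holds because `cycleProd k i` is fixed by
the shift. -/
theorem inl_letter_zero_mul_stableLetter_pow (i : ι) :
    (inl (letter k i 0) * stableLetter (shiftAut k)) ^ k i =
      (stableLetter _ * inl (letter k i 0)) ^ k i := by
  have h_pow : (inl (letter k i 0) * stableLetter (shiftAut k)) ^ k i =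
      inl (cycleProd k i) * stableLetter _ ^ k i := by
    rw [inl_cycleProd, inv_mul_cancel_right]
  have h_fix : stableLetter (shiftAut k) * inl (cycleProd k i) * (stableLetter _)⁻¹ =
      inl (cycleProd k i) := by
    simpa [shiftAut_apply, shift_cycleProd] using
      (inl_pow_apply (shiftAut k) 1 (cycleProd k i)).symm
  calc (inl (letter k i 0) * stableLetter (shiftAut k)) ^ k i
      = stableLetter _ * inl (cycleProd k i) * (stableLetter _)⁻¹ * stableLetter _ ^ k i := by
        rw [h_pow, h_fix]
    _ = stableLetter _ * (inl (letter k i 0) * stableLetter _) ^ k i * (stableLetter _)⁻¹ := by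
        rw [h_pow]; group
    _ = (stableLetter _ * inl (letter k i 0)) ^ k i := by
        rw [← conj_pow, mul_assoc, mul_inv_cancel_right]

variable {G : Type*} [Group G] (t : G) (leaf : ι → G)

variable (k) in
def conjLift : FreeGroup (Σ i, Fin (k i)) →* G :=
  FreeGroup.lift fun a => t ^ (a.2 : ℕ) * leaf a.1 * (t ^ (a.2 : ℕ))⁻¹

theorem conjLift_letter {i : ι} {j : ℕ} (h : j < k i) :
    conjLift k t leaf (letter k i j) = t ^ j * leaf i * (t ^ j)⁻¹ := by
  rw [letter_of_lt h, conjLift, FreeGroup.lift_apply_of]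

theorem conjLift_cycleProd (i : ι) :
    conjLift k t leaf (cycleProd k i) = (leaf i * t) ^ k i * (t ^ k i)⁻¹ := by
  rw [cycleProd, map_list_prod, List.map_map, ← prod_range_map_conj_pow]
  exact congrArg List.prod <| List.map_congr_left fun j hj =>
    conjLift_letter t leaf (List.mem_range.mp hj)

variable {t leaf}

theorem conjLift_shift (hrel : ∀ i, (leaf i * t) ^ k i = (t * leaf i) ^ k i)
    (y : FreeGroup (Σ i, Fin (k i))) :
    conjLift k t leaf (shift k y) = t * conjLift k t leaf y * t⁻¹ := by
  suffices h : (conjLift k t leaf).comp (shift k) =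
      (MulAut.conj t).toMonoidHom.comp (conjLift k t leaf) from DFunLike.congr_fun h y
  ext ⟨i, j, hj⟩
  simp only [MonoidHom.comp_apply, MulEquiv.coe_toMonoidHom, MulAut.conj_apply,
    ← letter_of_lt hj, conjLift_letter t leaf hj]
  by_cases h : j + 1 < k i
  · rw [shift_letter h, conjLift_letter t leaf h, pow_succ']
    group
  · have hk : k i = j + 1 := by omega
    have h_comm : ((leaf i * t) ^ k i)⁻¹ * leaf i * (leaf i * t) ^ k i = leaf i := by
      nth_rewrite 2 [hrel i]
      rw [mul_assoc, ← mul_pow_mul, inv_mul_cancel_left]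
    calc conjLift k t leaf (shift k (letter k i j))
        = t ^ k i * (((leaf i * t) ^ k i)⁻¹ * leaf i * (leaf i * t) ^ k i) * (t ^ k i)⁻¹ := by
          rw [shift_letter_last hk, map_mul, map_mul, map_inv, conjLift_cycleProd,
            conjLift_letter t leaf (by omega)]
          group
      _ = t * (t ^ j * leaf i * (t ^ j)⁻¹) * t⁻¹ := by
          rw [h_comm, hk, pow_succ']
          group

def torusLift (hrel : ∀ i, (leaf i * t) ^ k i = (t * leaf i) ^ k i) :
    MappingTorus (shiftAut k) →* G :=
  SemidirectProduct.lift (conjLift k t leaf) (zpowersHom G t) fun g => by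
    refine MonoidHom.ext fun y => ?_
    simp only [MonoidHom.comp_apply, MulEquiv.coe_toMonoidHom, zpowersHom_apply,
      MulAut.conj_apply]
    exact map_zpow_apply_of_map_apply_eq_conj _ (shiftAut k) t (conjLift_shift hrel) g.toAdd y

end CycleShift

theorem map_altProd {M N : Type*} [Monoid M] [Monoid N] (f : M →* N) (x y : M) (j : ℕ) :
    f (altProd x y j) = altProd (f x) (f y) j := by
  induction j generalizing x y with
  | zero => exact map_one f
  | succ j ih => rw [altProd, map_mul, ih, altProd]

theorem altProd_two_mul {M : Type*} [Monoid M] (x y : M) (p : ℕ) :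
    altProd x y (2 * p) = (x * y) ^ p := by
  induction p with
  | zero => rw [Nat.mul_zero, pow_zero]; rfl
  | succ p ih => rw [Nat.mul_succ, altProd, altProd, ih, pow_succ', mul_assoc]

namespace TwoEdgeTreeArtin

open SemidirectProduct MappingTorus PresentedGroup CycleShift

theorem of_zero_mul_of_one_pow (p n : ℕ) :
    (of 0 * of 1 : TwoEdgeTreeArtin (2 * p) n) ^ p = (of 1 * of 0) ^ p := by
  rw [← altProd_two_mul, ← altProd_two_mul]
  exact (map_altProd (mk _) _ _ _).symm.trans
    ((mk_eq_mk_of_mul_inv_mem (Set.mem_insert _ _)).trans (map_altProd _ _ _ _))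

theorem of_one_mul_of_two_pow (m q : ℕ) :
    (of 1 * of 2 : TwoEdgeTreeArtin m (2 * q)) ^ q = (of 2 * of 1) ^ q := by
  rw [← altProd_two_mul, ← altProd_two_mul]
  exact (map_altProd (mk _) _ _ _).symm.trans
    ((mk_eq_mk_of_mul_inv_mem (Set.mem_insert_of_mem _ (Set.mem_singleton _))).trans
      (map_altProd _ _ _ _))

variable (p q : ℕ)

def toMappingTorus : TwoEdgeTreeArtin (2 * p) (2 * q) →* MappingTorus (shiftAut ![p, q]) :=
  toGroup (f := ![inl (letter ![p, q] 0 0), stableLetter _, inl (letter ![p, q] 1 0)]) <| by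
    rintro r (rfl | rfl) <;>
      rw [map_mul, map_inv, map_altProd, map_altProd, FreeGroup.lift_apply_of,
        FreeGroup.lift_apply_of, altProd_two_mul, altProd_two_mul, mul_inv_eq_one]
    exacts [inl_letter_zero_mul_stableLetter_pow 0, (inl_letter_zero_mul_stableLetter_pow 1).symm]

def ofMappingTorus : MappingTorus (shiftAut ![p, q]) →* TwoEdgeTreeArtin (2 * p) (2 * q) :=
  torusLift (t := of 1) (leaf := ![of 0, of 2]) fun i => by
    fin_cases i
    exacts [of_zero_mul_of_one_pow p _, (of_one_mul_of_two_pow _ q).symm]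

variable {p q}

theorem ofMappingTorus_comp_toMappingTorus (hp : 0 < p) (hq : 0 < q) :
    (ofMappingTorus p q).comp (toMappingTorus p q) = MonoidHom.id _ := by
  refine PresentedGroup.ext fun x => ?_
  rw [MonoidHom.comp_apply, MonoidHom.id_apply, toMappingTorus, toGroup.of]
  fin_cases x
  · change ofMappingTorus p q (inl (letter ![p, q] 0 0)) = of 0
    rw [ofMappingTorus, torusLift, lift_inl, conjLift_letter (k := ![p, q]) _ _ hp]
    simp
  · change zpowersHom _ (of 1 : TwoEdgeTreeArtin (2 * p) (2 * q)) (Multiplicative.ofAdd 1) = of 1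
    rw [zpowersHom_apply, toAdd_ofAdd, zpow_one]
  · change ofMappingTorus p q (inl (letter ![p, q] 1 0)) = of 2
    rw [ofMappingTorus, torusLift, lift_inl, conjLift_letter (k := ![p, q]) _ _ hq]
    simp

theorem toMappingTorus_comp_ofMappingTorus :
    (toMappingTorus p q).comp (ofMappingTorus p q) = MonoidHom.id _ := by
  refine SemidirectProduct.hom_ext (FreeGroup.ext_hom _ _ fun ⟨i, j, hj⟩ => ?_)
    (MonoidHom.ext_mint rfl)
  have h_leaf : toMappingTorus p q (![of 0, of 2] i) = inl (letter ![p, q] i 0) := by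
    fin_cases i <;> exact toGroup.of _
  simp only [MonoidHom.comp_apply, ofMappingTorus, torusLift, lift_inl, conjLift,
    FreeGroup.lift_apply_of, map_mul, map_inv, map_pow, h_leaf]
  rw [show toMappingTorus p q (of 1) = stableLetter _ from toGroup.of _, ← inl_pow_apply,
    shiftAut_pow_letter_zero hj, letter_of_lt hj, MonoidHom.id_apply]

def mulEquivMappingTorus (hp : 0 < p) (hq : 0 < q) :
    TwoEdgeTreeArtin (2 * p) (2 * q) ≃* MappingTorus (shiftAut ![p, q]) :=
  MonoidHom.toMulEquiv _ _ (ofMappingTorus_comp_toMappingTorus hp hq)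
    toMappingTorus_comp_ofMappingTorus

end TwoEdgeTreeArtin

/-- Let `A_(I_m)` and `A_(I_n)` be dihedral Artin groups with even labels `m` and
`n` and let `A_Γ = A_(I_m) ∗_⟨w⟩ A_(I_n)` be the Artin group of the tree consisting
of the two corresponding edges sharing the vertex `w`. Then `A_Γ` is normally
poly-free. -/
theorem twoEdgeTreeArtin_isNormallyPolyFree (m n : ℕ) (hm : 2 ≤ m) (hn : 2 ≤ n)
    (hme : Even m) (hne : Even n) :
    IsNormallyPolyFree (TwoEdgeTreeArtin m n) := by
  obtain ⟨p, rfl⟩ := hme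
  obtain ⟨q, rfl⟩ := hne
  rw [← two_mul, ← two_mul]
  exact isNormallyPolyFree_of_mulEquiv_semidirectProduct
    (TwoEdgeTreeArtin.mulEquivMappingTorus (by omega) (by omega))
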